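/- arXiv:2512.01792 — 5 statements merged into one kernel-verified Lean document; each statement's English description precedes it below -/
import Mathlib

section
/- Let K : [0,∞) → (0,∞) satisfy (H1) and (H2) with constant β ≥ 0, and define K̂(z) = ∫₀^z K(t) dt. Then for every μ with 0 ≤ μ ≤ 1 and every z ≥ 0, one has K̂(μ·z) ≥ μ^{β+1} · K̂(z). -/
/-! The substitution `t ↦ μ t` turns `K̂ (μ z)` into `μ ∫₀^z K (μ t) dt`, and (H2) applied to
`μ t ≤ t` gives the pointwise bound `μ^β K t ≤ K (μ t)`. -/

open Set intervalIntegral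

theorem rpow_mul_le_comp_mul_of_antitoneOn_div_rpow {K : ℝ → ℝ} {β : ℝ}
    (hK : AntitoneOn (fun x => K x / x ^ β) (Ioi 0)) {μ t : ℝ}
    (hμ0 : 0 < μ) (hμ1 : μ ≤ 1) (ht : 0 < t) :
    μ ^ β * K t ≤ K (μ * t) := by
  have hμt : 0 < μ * t := mul_pos hμ0 ht
  have hratio : K t / t ^ β ≤ K (μ * t) / (μ * t) ^ β :=
    hK hμt ht (mul_le_of_le_one_left ht.le hμ1)
  rw [Real.mul_rpow hμ0.le ht.le] at hratio
  have htβ : 0 < t ^ β := Real.rpow_pos_of_pos ht β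
  have hμβ : 0 < μ ^ β := Real.rpow_pos_of_pos hμ0 β
  calc μ ^ β * K t = μ ^ β * t ^ β * (K t / t ^ β) := by field_simp
    _ ≤ μ ^ β * t ^ β * (K (μ * t) / (μ ^ β * t ^ β)) := by gcongr
    _ = K (μ * t) := by field_simp

theorem rpow_mul_integral_le_integral_comp_mul {K : ℝ → ℝ} {β : ℝ}
    (hcont : ContinuousOn K (Ici 0)) (hK : AntitoneOn (fun x => K x / x ^ β) (Ioi 0))
    {μ z : ℝ} (hμ0 : 0 < μ) (hμ1 : μ ≤ 1) (hz : 0 ≤ z) :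
    μ ^ β * ∫ t in (0:ℝ)..z, K t ≤ ∫ t in (0:ℝ)..z, K (μ * t) := by
  have hIcc : uIcc 0 z ⊆ Ici 0 := by
    rw [uIcc_of_le hz]
    exact Icc_subset_Ici_self
  rw [← integral_const_mul]
  refine integral_mono_on_of_le_Ioo hz ((hcont.mono hIcc).intervalIntegrable.const_mul _) ?_
    fun t ht => rpow_mul_le_comp_mul_of_antitoneOn_div_rpow hK hμ0 hμ1 ht.1
  refine ContinuousOn.intervalIntegrable (hcont.comp (by fun_prop) fun t ht => ?_)
  exact mul_nonneg hμ0.le (hIcc ht)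

theorem kirchhoff_primitive_lower_scaling_general (K : ℝ → ℝ) (β : ℝ) (hβ : 0 ≤ β)
    (hcont : ContinuousOn K (Set.Ici 0))
    (hanti : ∀ a b, 0 < a → a ≤ b → K b / b ^ β ≤ K a / a ^ β)
    (μ z : ℝ) (hμ0 : 0 ≤ μ) (hμ1 : μ ≤ 1) (hz : 0 ≤ z) :
    μ ^ (β + 1) * (∫ t in (0:ℝ)..z, K t) ≤ ∫ t in (0:ℝ)..(μ * z), K t := by
  rcases hμ0.eq_or_lt with rfl | hμ
  · simp [Real.zero_rpow (by linarith : β + 1 ≠ 0)]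
  have hsubst : ∫ t in (0:ℝ)..(μ * z), K t = μ * ∫ t in (0:ℝ)..z, K (μ * t) := by
    rw [mul_integral_comp_mul_left, mul_zero]
  rw [hsubst, Real.rpow_add hμ, Real.rpow_one, mul_comm (μ ^ β) μ, mul_assoc]
  exact mul_le_mul_of_nonneg_left (rpow_mul_integral_le_integral_comp_mul hcont
    (fun a ha b _ hab => hanti a b ha hab) hμ hμ1 hz) hμ.le

/-- Lemma 3.2 (6): if `K : [0,∞) → (0,∞)` is continuous, non-decreasing on `(0,∞)`
(hypothesis (H1)) and `z ↦ K z / z^β` is non-increasing on `(0,∞)` (hypothesis (H2))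
for some `β ≥ 0`, and `K̂ z = ∫₀^z K t dt`, then `K̂ (μ*z) ≥ μ^(β+1) * K̂ z`
for all `0 ≤ μ ≤ 1` and `z ≥ 0`. -/
theorem kirchhoff_primitive_lower_scaling (K : ℝ → ℝ) (β : ℝ) (hβ : 0 ≤ β)
    (hcont : ContinuousOn K (Set.Ici 0))
    (hpos : ∀ z, 0 ≤ z → 0 < K z)
    (hmono : ∀ a b, 0 < a → a ≤ b → K a ≤ K b)
    (hanti : ∀ a b, 0 < a → a ≤ b → K b / b ^ β ≤ K a / a ^ β)
    (μ z : ℝ) (hμ0 : 0 ≤ μ) (hμ1 : μ ≤ 1) (hz : 0 ≤ z) :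
    μ ^ (β + 1) * (∫ t in (0:ℝ)..z, K t) ≤ ∫ t in (0:ℝ)..(μ * z), K t :=
  kirchhoff_primitive_lower_scaling_general K β hβ hcont hanti μ z hμ0 hμ1 hz
end

section
/- Let T > 0, α > 1, and let K : [0,T] → ℝ be twice continuously differentiable with K(t) > 0 for all t ∈ [0,T], K(0) > 0, K'(0) > 0, and K''(t)·K(t) − α·(K'(t))² ≥ 0 for all t ∈ [0,T]. Then T ≤ K(0) / ((α−1)·K'(0)). -/
/-- A function with nonnegative derivative on a closed interval is monotone there. -/
lemma mono_of_hasDerivAt_nonneg {f f' : ℝ → ℝ} {a b : ℝ}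
    (h : ∀ t ∈ Set.Icc a b, HasDerivAt f (f' t) t)
    (h' : ∀ t ∈ Set.Icc a b, 0 ≤ f' t) :
    MonotoneOn f (Set.Icc a b) := by
  apply monotoneOn_of_deriv_nonneg (convex_Icc a b)
  · exact fun t ht => (h t ht).continuousAt.continuousWithinAt
  · intro t ht
    rw [interior_Icc] at ht
    exact ((h t (Set.Ioo_subset_Icc_self ht)).differentiableAt).differentiableWithinAt
  · intro t ht
    rw [interior_Icc] at ht
    rw [(h t (Set.Ioo_subset_Icc_self ht)).deriv]
    exact h' t (Set.Ioo_subset_Icc_self ht)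

lemma anti_of_hasDerivAt_nonpos {f f' : ℝ → ℝ} {a b : ℝ}
    (h : ∀ t ∈ Set.Icc a b, HasDerivAt f (f' t) t)
    (h' : ∀ t ∈ Set.Icc a b, f' t ≤ 0) :
    AntitoneOn f (Set.Icc a b) := by
  apply antitoneOn_of_deriv_nonpos (convex_Icc a b)
  · exact fun t ht => (h t ht).continuousAt.continuousWithinAt
  · intro t ht
    rw [interior_Icc] at ht
    exact ((h t (Set.Ioo_subset_Icc_self ht)).differentiableAt).differentiableWithinAt
  · intro t ht
    rw [interior_Icc] at ht
    rw [(h t (Set.Ioo_subset_Icc_self ht)).deriv]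
    exact h' t (Set.Ioo_subset_Icc_self ht)

/-- Lemma 2.2 (Levine's concavity lemma): let `T > 0`, `α > 1` and let `K` be a
twice continuously differentiable positive function on `[0,T]` with `K 0 > 0`,
`K' 0 > 0` and `K'' t * K t - α * (K' t)^2 ≥ 0` on `[0,T]`.
Then `T ≤ K 0 / ((α - 1) * K' 0)`. -/
theorem levine_concavity (T α : ℝ) (K K' K'' : ℝ → ℝ)
    (hT : 0 < T) (hα : 1 < α)
    (hderiv : ∀ t ∈ Set.Icc (0:ℝ) T, HasDerivAt K (K' t) t)
    (hderiv' : ∀ t ∈ Set.Icc (0:ℝ) T, HasDerivAt K' (K'' t) t)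
    (hcont : ContinuousOn K'' (Set.Icc (0:ℝ) T))
    (hKpos : ∀ t ∈ Set.Icc (0:ℝ) T, 0 < K t)
    (hK0 : 0 < K 0) (hK'0 : 0 < K' 0)
    (hineq : ∀ t ∈ Set.Icc (0:ℝ) T, 0 ≤ K'' t * K t - α * (K' t) ^ 2) :
    T ≤ K 0 / ((α - 1) * K' 0) := by
  have h0mem : (0:ℝ) ∈ Set.Icc (0:ℝ) T := ⟨le_refl 0, hT.le⟩
  have hTmem : T ∈ Set.Icc (0:ℝ) T := ⟨hT.le, le_refl T⟩
  -- Step 1: F = K'/K is nondecreasing, hence K' > 0 on [0,T].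
  have hF : ∀ t ∈ Set.Icc (0:ℝ) T,
      HasDerivAt (fun s => K' s / K s)
        ((K'' t * K t - K' t * K' t) / (K t) ^ 2) t :=
    fun t ht => (hderiv' t ht).div (hderiv t ht) (hKpos t ht).ne'
  have hFmono : MonotoneOn (fun s => K' s / K s) (Set.Icc (0:ℝ) T) := by
    apply mono_of_hasDerivAt_nonneg hF
    intro t ht
    have h1 := hineq t ht
    have h2 : (0:ℝ) < (K t) ^ 2 := pow_pos (hKpos t ht) 2
    apply div_nonneg _ h2.le
    nlinarith [sq_nonneg (K' t)]
  have hK'pos : ∀ t ∈ Set.Icc (0:ℝ) T, 0 < K' t := by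
    intro t ht
    have h1 : K' 0 / K 0 ≤ K' t / K t := hFmono h0mem ht ht.1
    have h2 : 0 < K' 0 / K 0 := div_pos hK'0 hK0
    have := lt_of_lt_of_le h2 h1
    exact (div_pos_iff.mp this).resolve_right (fun h => absurd h.2 (hKpos t ht).not_gt) |>.1
  -- Step 2: G = K/K' + (α-1)*t is nonincreasing.
  have hG : ∀ t ∈ Set.Icc (0:ℝ) T,
      HasDerivAt (fun s => K s / K' s + (α - 1) * s)
        ((K' t * K' t - K t * K'' t) / (K' t) ^ 2 + (α - 1)) t := by
    intro t ht
    exact ((hderiv t ht).div (hderiv' t ht) (hK'pos t ht).ne').add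
      (by simpa using (hasDerivAt_id t).const_mul (α - 1))
  have hGanti : AntitoneOn (fun s => K s / K' s + (α - 1) * s) (Set.Icc (0:ℝ) T) := by
    apply anti_of_hasDerivAt_nonpos hG
    intro t ht
    have h1 := hineq t ht
    have h2 : (0:ℝ) < (K' t) ^ 2 := pow_pos (hK'pos t ht) 2
    have h3 : (K' t * K' t - K t * K'' t) / (K' t) ^ 2 ≤ 1 - α := by
      rw [div_le_iff₀ h2]
      nlinarith
    linarith
  have hfin := hGanti h0mem hTmem hT.le
  simp only [mul_zero, add_zero] at hfin
  have hKT : 0 < K T / K' T := div_pos (hKpos T hTmem) (hK'pos T hTmem)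
  have hα1 : (0:ℝ) < α - 1 := by linarith
  rw [div_mul_eq_div_div_swap, le_div_iff₀ hα1]
  nlinarith [div_pos hK0 hK'0, hfin]
end

section
/- Let R : [0,∞) → [0,∞) be a non-increasing function and C > 0 a constant such that for every t ≥ 0 the function R is integrable on [t,∞) and ∫_t^∞ R(τ) dτ ≤ (1/C)·R(t). Then R(t) ≤ R(0)·e^{1−Ct} for all t ≥ 0. -/
/-!
Write `E t = ∫_t^∞ R`. Since `R` is non-increasing, `E t - E (t + h) ≥ h R (t + h) ≥ C h E (t + h)`,
so `E (t + h) ≤ E t / (1 + C h)`. Iterating `n` times with `h = t / n` and letting `n → ∞` gives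
`E t ≤ E 0 e^{-Ct}`. For `t ≥ 1/C` this yields
`R t / C ≤ ∫_{t - 1/C}^t R ≤ E (t - 1/C) ≤ E 0 e^{1 - Ct} ≤ R 0 e^{1 - Ct} / C`,
while for `t < 1/C` the bound `R t ≤ R 0` already suffices.
-/

open MeasureTheory Set Filter Real

section DiscreteGronwall

variable {E : ℝ → ℝ} {C : ℝ}

theorem one_add_mul_pow_mul_le (hC : 0 ≤ C)
    (hstep : ∀ t h, 0 ≤ t → 0 ≤ h → (1 + C * h) * E (t + h) ≤ E t) {h : ℝ} (hh : 0 ≤ h)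
    (k : ℕ) : (1 + C * h) ^ k * E (k * h) ≤ E 0 := by
  induction k with
  | zero => simp
  | succ k ih =>
    calc (1 + C * h) ^ (k + 1) * E ((k + 1 : ℕ) * h)
        = (1 + C * h) ^ k * ((1 + C * h) * E (k * h + h)) := by push_cast; ring_nf
      _ ≤ (1 + C * h) ^ k * E (k * h) := by
        gcongr
        exact hstep _ _ (by positivity) hh
      _ ≤ E 0 := ih

theorem mul_exp_le_of_one_add_mul_le (hC : 0 ≤ C)
    (hstep : ∀ t h, 0 ≤ t → 0 ≤ h → (1 + C * h) * E (t + h) ≤ E t) {t : ℝ} (ht : 0 ≤ t) :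
    E t * exp (C * t) ≤ E 0 := by
  refine le_of_tendsto ((tendsto_one_add_div_pow_exp (C * t)).const_mul (E t)) ?_
  filter_upwards [eventually_gt_atTop 0] with n hn
  have hn : (n : ℝ) ≠ 0 := by positivity
  have := one_add_mul_pow_mul_le hC hstep (h := t / n) (by positivity) n
  rwa [mul_div_cancel₀ t hn, mul_div_assoc', mul_comm] at this

end DiscreteGronwall

section TailIntegral

variable {R : ℝ → ℝ} {C t u : ℝ}

theorem setIntegral_Ici_eq_setIntegral_Ico_add (htu : t ≤ u) (hR : IntegrableOn R (Ici t)) :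
    ∫ τ in Ici t, R τ = (∫ τ in Ico t u, R τ) + ∫ τ in Ici u, R τ := by
  rw [← Ico_union_Ici_eq_Ici htu]
  exact setIntegral_union ((Iio_disjoint_Ici le_rfl).mono_left Ico_subset_Iio_self)
    measurableSet_Ici (hR.mono_set (Ico_union_Ici_eq_Ici htu ▸ subset_union_left))
    (hR.mono_set (Ico_union_Ici_eq_Ici htu ▸ subset_union_right))

theorem mul_le_setIntegral_Ico_of_antitoneOn (htu : t ≤ u) (hR : AntitoneOn R (Icc t u)) :
    (u - t) * R u ≤ ∫ τ in Ico t u, R τ := by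
  have hint : IntegrableOn R (Ico t u) :=
    (hR.integrableOn_isCompact isCompact_Icc).mono_set Ico_subset_Icc_self
  have := setIntegral_ge_of_const_le_real (c := R u) measurableSet_Ico (by simp)
    (fun x hx => hR (Ico_subset_Icc_self hx) (right_mem_Icc.2 htu) hx.2.le) hint
  rwa [Real.volume_real_Ico_of_le htu, mul_comm] at this

theorem mul_add_setIntegral_Ici_le (htu : t ≤ u) (hanti : AntitoneOn R (Ici t))
    (hR : IntegrableOn R (Ici t)) :
    (u - t) * R u + ∫ τ in Ici u, R τ ≤ ∫ τ in Ici t, R τ := by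
  rw [setIntegral_Ici_eq_setIntegral_Ico_add htu hR]
  gcongr
  exact mul_le_setIntegral_Ico_of_antitoneOn htu (hanti.mono Icc_subset_Ici_self)

theorem mul_le_setIntegral_Ici_of_antitoneOn (htu : t ≤ u) (hanti : AntitoneOn R (Ici t))
    (hR : IntegrableOn R (Ici t)) (hnonneg : ∀ x ∈ Ici u, 0 ≤ R x) :
    (u - t) * R u ≤ ∫ τ in Ici t, R τ := by
  have htail : 0 ≤ ∫ τ in Ici u, R τ := setIntegral_nonneg measurableSet_Ici hnonneg
  linarith [mul_add_setIntegral_Ici_le htu hanti hR]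

theorem setIntegral_Ici_mul_exp_le (hC : 0 ≤ C) (hanti : AntitoneOn R (Ici 0))
    (hR : IntegrableOn R (Ici 0)) (hineq : ∀ t, 0 ≤ t → C * ∫ τ in Ici t, R τ ≤ R t)
    (ht : 0 ≤ t) : (∫ τ in Ici t, R τ) * exp (C * t) ≤ ∫ τ in Ici 0, R τ := by
  refine mul_exp_le_of_one_add_mul_le (E := fun t => ∫ τ in Ici t, R τ) hC
    (fun t h ht hh => ?_) ht
  have hslab := mul_add_setIntegral_Ici_le (le_add_of_nonneg_right hh)
    (hanti.mono (Ici_subset_Ici.2 ht)) (hR.mono_set (Ici_subset_Ici.2 ht))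
  rw [add_sub_cancel_left] at hslab
  nlinarith [hineq (t + h) (by positivity)]

end TailIntegral

/-- Lemma 2.3, case `η = 0` (Komornik): if `R : [0,∞) → [0,∞)` is non-increasing,
`C > 0`, and `∫_t^∞ R ≤ (1/C) * R t` for all `t ≥ 0`, then
`R t ≤ R 0 * exp (1 - C * t)` for all `t ≥ 0`. -/
theorem komornik_exponential_decay (R : ℝ → ℝ) (C : ℝ) (hC : 0 < C)
    (hnonneg : ∀ t, 0 ≤ t → 0 ≤ R t)
    (hanti : ∀ s t, 0 ≤ s → s ≤ t → R t ≤ R s)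
    (hint : ∀ t, 0 ≤ t → IntegrableOn R (Set.Ici t))
    (hineq : ∀ t, 0 ≤ t → (∫ τ in Set.Ici t, R τ) ≤ (1 / C) * R t) :
    ∀ t, 0 ≤ t → R t ≤ R 0 * Real.exp (1 - C * t) := by
  have hanti' : AntitoneOn R (Ici 0) := fun a ha b _ hab => hanti a b ha hab
  have hCE (t : ℝ) (ht : 0 ≤ t) : C * ∫ τ in Ici t, R τ ≤ R t :=
    (le_div_iff₀' hC).1 (one_div_mul_eq_div C (R t) ▸ hineq t ht)
  intro t ht
  rcases le_or_gt (C * t) 1 with hsmall | hlarge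
  · calc R t ≤ R 0 := hanti 0 t le_rfl ht
      _ ≤ R 0 * exp (1 - C * t) :=
        le_mul_of_one_le_right (hnonneg 0 le_rfl) (one_le_exp (by linarith))
  set s := t - 1 / C
  have hs : 0 ≤ s := by rw [sub_nonneg, div_le_iff₀ hC]; linarith
  have hts : t - s = 1 / C := sub_sub_cancel t _
  have hCs : -(C * s) = 1 - C * t := by simp only [s]; field_simp; ring
  calc R t = C * ((t - s) * R t) := by rw [hts]; field_simp
    _ ≤ C * ∫ τ in Ici s, R τ := by
      gcongr
      exact mul_le_setIntegral_Ici_of_antitoneOn (sub_le_self t (by positivity))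
        (hanti'.mono (Ici_subset_Ici.2 hs)) (hint s hs) fun x hx => hnonneg x (ht.trans hx)
    _ ≤ C * ((∫ τ in Ici 0, R τ) * exp (-(C * s))) := by
      gcongr
      rw [exp_neg, ← div_eq_mul_inv, le_div_iff₀ (exp_pos _)]
      exact setIntegral_Ici_mul_exp_le hC.le hanti' (hint 0 le_rfl) hCE hs
    _ ≤ R 0 * exp (1 - C * t) := by
      rw [← mul_assoc, ← hCs]
      gcongr
      exact hCE 0 le_rfl
end

section
/- Let R : [0,∞) → [0,∞) be a non-increasing function, and let η > 0 and C > 0 be constants such that for every t ≥ 0 the function R^{1+η} is integrable on [t,∞) and ∫_t^∞ R(τ)^{1+η} dτ ≤ (1/C)·R(0)^η·R(t). Then R(t) ≤ R(0)·((1+η)/(1+η·C·t))^{1/η} for all t ≥ 0. -/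
/-!
Put `F t = ∫_t^∞ R^(1+η)`. The hypothesis says `R ≥ c F` with `c = C / R(0)^η`, and since `F` is
non-increasing, `F s - F u ≥ (u - s) (c F u)^(1+η)`: an integrated form of `F' ≤ -k F^(1+η)`,
`k = c^(1+η)`. Along a partition of `[0, s]` into steps of length `Δ`, Bernoulli's inequality shows
that `F^(-η)` gains at least `η k Δ - O(Δ²)` per step; refining the partition gives
`F(s)^(-η) ≥ F(0)^(-η) + η k s`, i.e. `F s ≤ R(0)^(1+η)/C · (1 + η C s)^(-1/η)`.
Finally `R(t)^(1+η) (t - s) ≤ F s` by monotonicity, and `s = (C t - 1)/(C (1 + η))` balances the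
two factors.
-/

open MeasureTheory Set Filter Topology

lemma one_sub_mul_le_one_add_rpow_neg {p v : ℝ} (hp : 1 ≤ p) (hv : 0 ≤ v) :
    1 - p * v ≤ (1 + v) ^ (-p) := by
  have hv' : 0 < 1 + v := by linarith
  have hinv : (1 + v)⁻¹ = 1 + -(v / (1 + v)) := by field_simp; ring
  have hbern := one_add_mul_self_le_rpow_one_add (s := -(v / (1 + v)))
    (by rw [neg_le_neg_iff, div_le_one hv']; linarith) hp
  have hfrac : v / (1 + v) ≤ v := div_le_self hv (by linarith)
  rw [Real.rpow_neg hv'.le, ← Real.inv_rpow hv'.le, hinv]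
  nlinarith

lemma mul_sub_mul_sq_le_one_sub_one_add_rpow_neg {η v : ℝ} (hη : 0 ≤ η) (hv : 0 ≤ v) :
    η * v - η * (1 + η) * v ^ 2 ≤ 1 - (1 + v) ^ (-η) := by
  have hv' : 0 < 1 + v := by linarith
  have hbern := one_add_mul_self_le_rpow_one_add (s := v) (by linarith) (p := 1 + η) (by linarith)
  have hlow := one_sub_mul_le_one_add_rpow_neg (p := 1 + η) (by linarith) hv
  have hsplit : (1 + v) ^ (-η) = (1 + v) * (1 + v) ^ (-(1 + η)) := by
    rw [Real.rpow_neg hv'.le, Real.rpow_neg hv'.le, Real.rpow_one_add' hv'.le (by linarith)]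
    field_simp
  have hprod : (1 + v) ^ (1 + η) * (1 + v) ^ (-(1 + η)) = 1 := by
    rw [← Real.rpow_add hv']; simp
  have hpos : 0 ≤ (1 + v) ^ (-(1 + η)) := Real.rpow_nonneg hv'.le _
  rw [hsplit]
  nlinarith [mul_le_mul_of_nonneg_right hbern hpos,
    mul_le_mul_of_nonneg_left hlow (mul_nonneg hη hv)]

lemma mul_sub_le_rpow_neg_sub_rpow_neg {η k Δ x y : ℝ} (hη : 0 ≤ η) (hk : 0 ≤ k) (hΔ : 0 ≤ Δ)
    (hy : 0 < y) (hxy : y + k * Δ * y ^ (1 + η) ≤ x) :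
    η * k * Δ - η * (1 + η) * k ^ 2 * y ^ η * Δ ^ 2 ≤ y ^ (-η) - x ^ (-η) := by
  set v := k * Δ * y ^ η
  have hv : 0 ≤ v := by positivity
  have hyv : y * (1 + v) ≤ x := by
    rwa [Real.rpow_one_add' hy.le (by positivity), mul_left_comm, ← mul_one_add] at hxy
  have hx : x ^ (-η) ≤ y ^ (-η) * (1 + v) ^ (-η) := by
    rw [← Real.mul_rpow hy.le (by positivity)]
    exact Real.rpow_le_rpow_of_nonpos (by positivity) hyv (by linarith)
  have hyy : y ^ (-η) * y ^ η = 1 := by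
    rw [← Real.rpow_add hy]; simp
  have hbern := mul_le_mul_of_nonneg_left (mul_sub_mul_sq_le_one_sub_one_add_rpow_neg hη hv)
    (Real.rpow_nonneg hy.le (-η))
  calc η * k * Δ - η * (1 + η) * k ^ 2 * y ^ η * Δ ^ 2
      = y ^ (-η) * (η * v - η * (1 + η) * v ^ 2) := by
        simp only [v]
        linear_combination (-(η * k * Δ) + η * (1 + η) * k ^ 2 * Δ ^ 2 * y ^ η) * hyy
    _ ≤ y ^ (-η) * (1 - (1 + v) ^ (-η)) := hbern
    _ ≤ y ^ (-η) - x ^ (-η) := by linarith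

lemma mul_sub_le_sub_of_mul_sub_sub_sq_le {f : ℝ → ℝ} {a b c M : ℝ} (hab : a ≤ b)
    (h : ∀ s u, a ≤ s → s ≤ u → u ≤ b → c * (u - s) - M * (u - s) ^ 2 ≤ f u - f s) :
    c * (b - a) ≤ f b - f a := by
  have hn : ∀ n : ℕ, 1 ≤ n → c * (b - a) - M * (b - a) ^ 2 / n ≤ f b - f a := by
    intro n hn
    have hn' : (0 : ℝ) < n := by exact_mod_cast hn
    set Δ := (b - a) / n
    have hΔ : 0 ≤ Δ := div_nonneg (sub_nonneg.2 hab) hn'.le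
    have hnΔ : n * Δ = b - a := by simp only [Δ]; field_simp
    let x : ℕ → ℝ := fun i => a + i * Δ
    have hterm : ∀ i ∈ Finset.range n, c * Δ - M * Δ ^ 2 ≤ f (x (i + 1)) - f (x i) := by
      intro i hi
      have hi : (i : ℝ) + 1 ≤ n := by exact_mod_cast Finset.mem_range.1 hi
      have hx : x (i + 1) - x i = Δ := by simp only [x]; push_cast; ring
      have := h (x i) (x (i + 1)) (le_add_of_nonneg_right (by positivity)) (by linarith)
        (by simp only [x]; push_cast; nlinarith)
      rwa [hx] at this
    calc c * (b - a) - M * (b - a) ^ 2 / n = n * (c * Δ - M * Δ ^ 2) := by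
          rw [← hnΔ]; field_simp
      _ ≤ ∑ i ∈ Finset.range n, (f (x (i + 1)) - f (x i)) := by
          simpa using Finset.card_nsmul_le_sum _ _ _ hterm
      _ = f b - f a := by
          rw [Finset.sum_range_sub (fun i => f (x i))]; simp [x, hnΔ]
  have hlim :
      Tendsto (fun n : ℕ => c * (b - a) - M * (b - a) ^ 2 / n) atTop (𝓝 (c * (b - a))) := by
    simpa using tendsto_const_nhds.sub (tendsto_const_div_atTop_nhds_zero_nat (M * (b - a) ^ 2))
  exact le_of_tendsto hlim (eventually_atTop.2 ⟨1, hn⟩)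

lemma rpow_neg_add_mul_le_rpow_neg_of_step {F : ℝ → ℝ} {η k a b : ℝ} (hη : 0 ≤ η) (hk : 0 ≤ k)
    (hab : a ≤ b) (hF : AntitoneOn F (Icc a b)) (hFb : 0 < F b)
    (hstep : ∀ s u, a ≤ s → s ≤ u → u ≤ b → F u + k * (u - s) * F u ^ (1 + η) ≤ F s) :
    F a ^ (-η) + η * k * (b - a) ≤ F b ^ (-η) := by
  suffices η * k * (b - a) ≤ F b ^ (-η) - F a ^ (-η) by linarith
  refine mul_sub_le_sub_of_mul_sub_sub_sq_le (f := fun x => F x ^ (-η))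
    (M := η * (1 + η) * k ^ 2 * F a ^ η) hab ?_
  intro s u has hsu hub
  have hFu : 0 < F u := hFb.trans_le (hF ⟨has.trans hsu, hub⟩ ⟨hab, le_rfl⟩ hub)
  have hFua : F u ^ η ≤ F a ^ η :=
    Real.rpow_le_rpow hFu.le (hF ⟨le_rfl, hab⟩ ⟨has.trans hsu, hub⟩ (has.trans hsu)) hη
  have hgain :=
    mul_sub_le_rpow_neg_sub_rpow_neg hη hk (sub_nonneg.2 hsu) hFu (hstep s u has hsu hub)
  have hloss : η * (1 + η) * k ^ 2 * F u ^ η * (u - s) ^ 2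
      ≤ η * (1 + η) * k ^ 2 * F a ^ η * (u - s) ^ 2 := by
    gcongr
  linarith

lemma le_rpow_neg_add_mul_rpow_of_step {F : ℝ → ℝ} {η k a b A : ℝ} (hη : 0 < η) (hk : 0 ≤ k)
    (hab : a ≤ b) (hF : AntitoneOn F (Icc a b)) (hFb : 0 ≤ F b) (hFa : F a ≤ A)
    (hstep : ∀ s u, a ≤ s → s ≤ u → u ≤ b → F u + k * (u - s) * F u ^ (1 + η) ≤ F s) :
    F b ≤ (A ^ (-η) + η * k * (b - a)) ^ (-1 / η) := by
  have hA : 0 ≤ A := hFb.trans ((hF ⟨le_rfl, hab⟩ ⟨hab, le_rfl⟩ hab).trans hFa)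
  have hgrowth : 0 ≤ η * k * (b - a) := by have := sub_nonneg.2 hab; positivity
  rcases hFb.eq_or_lt with hFb0 | hFb
  · rw [← hFb0]
    exact Real.rpow_nonneg (add_nonneg (Real.rpow_nonneg hA _) hgrowth) _
  have hFa0 : 0 < F a := hFb.trans_le (hF ⟨le_rfl, hab⟩ ⟨hab, le_rfl⟩ hab)
  have hcomp := rpow_neg_add_mul_le_rpow_neg_of_step hη.le hk hab hF hFb hstep
  have hAa : A ^ (-η) ≤ F a ^ (-η) := Real.rpow_le_rpow_of_nonpos hFa0 hFa (by linarith)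
  calc F b = (F b ^ (-η)) ^ (-1 / η) := by
        rw [← Real.rpow_mul hFb.le, show -η * (-1 / η) = 1 by field_simp, Real.rpow_one]
    _ ≤ (A ^ (-η) + η * k * (b - a)) ^ (-1 / η) :=
        Real.rpow_le_rpow_of_nonpos
          (add_pos_of_pos_of_nonneg (Real.rpow_pos_of_pos (hFa0.trans_le hFa) _) hgrowth)
          (by linarith) (div_nonpos_of_nonpos_of_nonneg (by norm_num) hη.le)

lemma mul_sub_le_integral_Ici_sub_integral_Ici {g : ℝ → ℝ} {s u c : ℝ}
    (hg : IntegrableOn g (Ici s)) (hsu : s ≤ u) (hc : ∀ τ ∈ Ico s u, c ≤ g τ) :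
    c * (u - s) ≤ (∫ τ in Ici s, g τ) - ∫ τ in Ici u, g τ := by
  rw [intervalIntegral.integral_Ici_sub_Ici hg hsu, ← Real.volume_real_Ico_of_le hsu]
  exact setIntegral_ge_of_const_le_real measurableSet_Ico (by simp) hc
    (hg.mono_set Ico_subset_Ici_self)

lemma antitoneOn_integral_Ici {g : ℝ → ℝ} (hg : ∀ τ, 0 ≤ τ → 0 ≤ g τ)
    (hint : ∀ t, 0 ≤ t → IntegrableOn g (Ici t)) :
    AntitoneOn (fun u => ∫ τ in Ici u, g τ) (Ici 0) := by
  intro s hs u _ hsu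
  have := mul_sub_le_integral_Ici_sub_integral_Ici (c := 0) (hint s hs) hsu
    fun τ hτ => hg τ (le_trans hs hτ.1)
  linarith

section Tail

variable {R : ℝ → ℝ} {p : ℝ}

lemma integral_Ici_rpow_add_mul_le (hp : 0 ≤ p) {c : ℝ} (hc : 0 ≤ c)
    (hR : ∀ τ, 0 ≤ τ → 0 ≤ R τ) (hint : ∀ t, 0 ≤ t → IntegrableOn (fun τ => R τ ^ p) (Ici t))
    (hRF : ∀ τ, 0 ≤ τ → c * ∫ x in Ici τ, R x ^ p ≤ R τ) {s u : ℝ} (hs : 0 ≤ s) (hsu : s ≤ u) :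
    (∫ x in Ici u, R x ^ p) + c ^ p * (u - s) * (∫ x in Ici u, R x ^ p) ^ p
      ≤ ∫ x in Ici s, R x ^ p := by
  set F := fun u => ∫ x in Ici u, R x ^ p
  have hF := antitoneOn_integral_Ici (fun τ hτ => Real.rpow_nonneg (hR τ hτ) p) hint
  have hFu : 0 ≤ F u := setIntegral_nonneg measurableSet_Ici
    fun τ hτ => Real.rpow_nonneg (hR τ (hs.trans (hsu.trans hτ))) p
  have hlow : ∀ τ ∈ Ico s u, c ^ p * F u ^ p ≤ R τ ^ p := by
    intro τ hτ
    have hτ0 : 0 ≤ τ := hs.trans hτ.1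
    have hcF : c * F u ≤ R τ :=
      (mul_le_mul_of_nonneg_left (hF hτ0 (hs.trans hsu) hτ.2.le) hc).trans (hRF τ hτ0)
    rw [← Real.mul_rpow hc hFu]
    exact Real.rpow_le_rpow (by positivity) hcF hp
  have := mul_sub_le_integral_Ici_sub_integral_Ici (hint s hs) hsu hlow
  simp only [F] at this ⊢
  linarith

lemma rpow_mul_sub_le_integral_Ici_rpow (hp : 0 ≤ p) (hR : ∀ τ, 0 ≤ τ → 0 ≤ R τ)
    (hanti : ∀ s t, 0 ≤ s → s ≤ t → R t ≤ R s)
    (hint : ∀ t, 0 ≤ t → IntegrableOn (fun τ => R τ ^ p) (Ici t)) {s t : ℝ} (hs : 0 ≤ s)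
    (hst : s ≤ t) :
    R t ^ p * (t - s) ≤ ∫ x in Ici s, R x ^ p := by
  have hlow : ∀ τ ∈ Ico s t, R t ^ p ≤ R τ ^ p := fun τ hτ =>
    Real.rpow_le_rpow (hR t (hs.trans hst)) (hanti τ t (hs.trans hτ.1) hτ.2.le) hp
  have hdiff := mul_sub_le_integral_Ici_sub_integral_Ici (hint s hs) hst hlow
  have htail : 0 ≤ ∫ x in Ici t, R x ^ p := setIntegral_nonneg measurableSet_Ici
    fun τ hτ => Real.rpow_nonneg (hR τ (hs.trans (hst.trans hτ))) p
  linarith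

end Tail

lemma integral_Ici_rpow_le_div_mul_rpow {R : ℝ → ℝ} {η C : ℝ} (hη : 0 < η)
    (hC : 0 < C) (hnonneg : ∀ t, 0 ≤ t → 0 ≤ R t) (hR0 : 0 < R 0)
    (hint : ∀ t, 0 ≤ t → IntegrableOn (fun τ => R τ ^ (1 + η)) (Ici t))
    (hineq : ∀ t, 0 ≤ t → (∫ τ in Ici t, R τ ^ (1 + η)) ≤ (1 / C) * R 0 ^ η * R t)
    {s : ℝ} (hs : 0 ≤ s) :
    ∫ τ in Ici s, R τ ^ (1 + η) ≤ R 0 ^ (1 + η) / C * (1 + η * C * s) ^ (-1 / η) := by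
  set F := fun u => ∫ τ in Ici u, R τ ^ (1 + η)
  have hR0η : 0 < R 0 ^ η := Real.rpow_pos_of_pos hR0 η
  set c := C / R 0 ^ η with hc_def
  have hc : 0 < c := div_pos hC hR0η
  have hRF : ∀ τ, 0 ≤ τ → c * F τ ≤ R τ := fun τ hτ =>
    calc c * F τ ≤ c * ((1 / C) * R 0 ^ η * R τ) :=
          mul_le_mul_of_nonneg_left (hineq τ hτ) hc.le
      _ = R τ := by rw [hc_def]; field_simp
  have hF0 : F 0 ≤ R 0 / c := (hineq 0 le_rfl).trans_eq (by rw [hc_def]; field_simp)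
  have hF := (antitoneOn_integral_Ici (fun τ hτ => Real.rpow_nonneg (hnonneg τ hτ) _) hint).mono
    (Icc_subset_Ici_self : Icc 0 s ⊆ Ici 0)
  have := le_rpow_neg_add_mul_rpow_of_step hη (Real.rpow_nonneg hc.le (1 + η)) hs hF
    (setIntegral_nonneg measurableSet_Ici fun τ hτ =>
      Real.rpow_nonneg (hnonneg τ (hs.trans hτ)) _) hF0
    fun s' u hs' hsu _ =>
      integral_Ici_rpow_add_mul_le (by linarith) hc.le hnonneg hint hRF hs' hsu
  refine this.trans_eq ?_
  set X := (R 0 / c) ^ (-η) with hX_def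
  have hX : c ^ (1 + η) = X * C := by
    rw [hX_def, Real.rpow_neg (by positivity), Real.div_rpow hR0.le hc.le,
      Real.rpow_one_add' hc.le (by positivity), hc_def]
    field_simp
  have hXinv : X ^ (-1 / η) = R 0 ^ (1 + η) / C := by
    rw [hX_def, ← Real.rpow_mul (by positivity), show -η * (-1 / η) = 1 by field_simp,
      Real.rpow_one, Real.rpow_one_add' hR0.le (by positivity), hc_def]
    field_simp
  rw [hX, show X + η * (X * C) * (s - 0) = X * (1 + η * C * s) by ring,
    Real.mul_rpow (by positivity) (by positivity), hXinv]

lemma le_mul_rpow_of_integral_Ici_rpow_le {R : ℝ → ℝ} {η C M t : ℝ} (hη : 0 < η) (hC : 0 < C)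
    (hM : 0 ≤ M) (hnonneg : ∀ t, 0 ≤ t → 0 ≤ R t) (hanti : ∀ s t, 0 ≤ s → s ≤ t → R t ≤ R s)
    (hint : ∀ t, 0 ≤ t → IntegrableOn (fun τ => R τ ^ (1 + η)) (Ici t))
    (htail : ∀ s, 0 ≤ s →
      ∫ τ in Ici s, R τ ^ (1 + η) ≤ M ^ (1 + η) / C * (1 + η * C * s) ^ (-1 / η))
    (ht : 1 < C * t) :
    R t ≤ M * ((1 + η) / (1 + η * C * t)) ^ (1 / η) := by
  -- `s` is chosen so that `1 + η C s = C (t - s)`, which optimises the bound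
  set s := (C * t - 1) / (C * (1 + η))
  set w := (1 + η * C * t) / (1 + η)
  have hw : 0 < w := div_pos (by nlinarith) (by linarith)
  have hs : 0 ≤ s := div_nonneg (by linarith) (by positivity)
  have hst : s ≤ t := by
    rw [div_le_iff₀ (by positivity)]; nlinarith
  have hws : 1 + η * C * s = w := by simp only [s, w]; field_simp; ring
  have hwt : t - s = w / C := by simp only [s, w]; field_simp; ring
  have hRt := (rpow_mul_sub_le_integral_Ici_rpow (by linarith) hnonneg hanti hint hs hst).trans
    (htail s hs)
  rw [hws, hwt] at hRt
  have hpow : R t ^ (1 + η) ≤ (M * w ^ (-1 / η)) ^ (1 + η) := by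
    rw [Real.mul_rpow hM (by positivity), ← Real.rpow_mul hw.le,
      show -1 / η * (1 + η) = -1 / η + -1 by field_simp; ring, Real.rpow_add hw,
      Real.rpow_neg_one]
    rw [mul_div_assoc', div_le_iff₀ hC] at hRt
    rw [← mul_assoc, ← div_eq_mul_inv, le_div_iff₀ hw]
    exact hRt.trans_eq (by field_simp)
  rw [Real.rpow_le_rpow_iff (hnonneg t (hs.trans hst)) (by positivity) (by linarith)] at hpow
  rwa [← inv_div, Real.inv_rpow hw.le, ← Real.rpow_neg hw.le, ← neg_div]

/-- Lemma 2.3, case `η > 0` (Komornik): if `R : [0,∞) → [0,∞)` is non-increasing,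
`η, C > 0`, and `∫_t^∞ R^(1+η) ≤ (1/C) * R 0 ^ η * R t` for all `t ≥ 0`, then
`R t ≤ R 0 * ((1+η)/(1+η*C*t))^(1/η)` for all `t ≥ 0`. -/
theorem komornik_polynomial_decay (R : ℝ → ℝ) (η C : ℝ) (hη : 0 < η) (hC : 0 < C)
    (hnonneg : ∀ t, 0 ≤ t → 0 ≤ R t)
    (hanti : ∀ s t, 0 ≤ s → s ≤ t → R t ≤ R s)
    (hint : ∀ t, 0 ≤ t → IntegrableOn (fun τ => R τ ^ (1 + η)) (Set.Ici t))
    (hineq : ∀ t, 0 ≤ t → (∫ τ in Set.Ici t, R τ ^ (1 + η)) ≤ (1 / C) * R 0 ^ η * R t) :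
    ∀ t, 0 ≤ t → R t ≤ R 0 * ((1 + η) / (1 + η * C * t)) ^ (1 / η) := by
  intro t ht
  rcases (hnonneg 0 le_rfl).eq_or_lt with hR0 | hR0
  · simpa [← hR0] using hanti 0 t le_rfl ht
  rcases le_or_gt (C * t) 1 with hCt | hCt
  · have hD : 1 ≤ (1 + η) / (1 + η * C * t) := (one_le_div (by positivity)).2 (by nlinarith)
    exact (hanti 0 t le_rfl ht).trans
      (le_mul_of_one_le_right hR0.le (Real.one_le_rpow hD (by positivity)))
  exact le_mul_rpow_of_integral_Ici_rpow_le hη hC hR0.le hnonneg hanti hint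
    (fun s hs => integral_Ici_rpow_le_div_mul_rpow hη hC hnonneg hR0 hint hineq hs) hCt
end

section
/- Let U ⊂ ℝ^N be a Lebesgue-measurable set of finite measure |U|, let u : U → ℝ be measurable, and let σ, r, Λ, S be positive real numbers with σ < r and (∫_U |u(x)|^r dx)^{1/r} ≤ S·Λ. Then ∫_U |u(x)|^σ · |log(|u(x)|/Λ)| dx ≤ ( |U|/(σ·e) + S^r/(e·(r−σ)) ) · Λ^σ, where the integrand is interpreted as 0 at points where u(x) = 0 and e = exp(1). -/
/-!
With `t = |u| / Λ`, both halves of `t ^ σ * |log t| ≤ 1 / (σ e) + t ^ r / ((r - σ) e)` come from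
`log y ≤ y / e`, applied to `y = t ^ (-σ)` (the part where `t ≤ 1`) and to `y = t ^ (r - σ)`
(the part where `t > 1`). Integrating this pointwise bound over `U` and using
`∫_U |u| ^ r ≤ (S Λ) ^ r` gives the estimate.
-/

open MeasureTheory Real

namespace Real

lemma log_le_div_exp_one {y : ℝ} (hy : 0 < y) : log y ≤ y / exp 1 := by
  rw [le_div_iff₀' (exp_pos 1)]
  simpa [exp_log hy] using exp_one_mul_le_exp (x := log y)

lemma log_le_rpow_div_mul_exp_one {t ε : ℝ} (ht : 0 < t) (hε : 0 < ε) :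
    log t ≤ t ^ ε / (ε * exp 1) := by
  have h := log_le_div_exp_one (rpow_pos_of_pos ht ε)
  rw [log_rpow ht] at h
  rw [div_mul_eq_div_div_swap, le_div_iff₀ hε]
  linarith

lemma rpow_mul_neg_log_le {t σ : ℝ} (ht : 0 < t) (hσ : 0 < σ) :
    t ^ σ * -log t ≤ 1 / (σ * exp 1) := by
  have h := log_le_rpow_div_mul_exp_one (inv_pos.2 ht) hσ
  rw [log_inv, inv_rpow ht.le] at h
  calc t ^ σ * -log t ≤ t ^ σ * ((t ^ σ)⁻¹ / (σ * exp 1)) :=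
        mul_le_mul_of_nonneg_left h (rpow_nonneg ht.le σ)
    _ = 1 / (σ * exp 1) := by
        rw [← mul_div_assoc, mul_inv_cancel₀ (rpow_pos_of_pos ht σ).ne']

lemma rpow_mul_abs_log_le {t σ r : ℝ} (ht : 0 ≤ t) (hσ : 0 < σ) (hσr : σ < r) :
    t ^ σ * |log t| ≤ 1 / (σ * exp 1) + t ^ r / ((r - σ) * exp 1) := by
  have hsmall : 0 ≤ 1 / (σ * exp 1) := by positivity
  have hlarge : 0 ≤ t ^ r / ((r - σ) * exp 1) := by positivity
  rcases ht.eq_or_lt with rfl | ht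
  · rw [zero_rpow hσ.ne', zero_mul]
    exact add_nonneg hsmall hlarge
  rw [abs_eq_max_neg, mul_max_of_nonneg _ _ (rpow_nonneg ht.le σ), max_le_iff]
  refine ⟨?_, by linarith [rpow_mul_neg_log_le ht hσ]⟩
  calc t ^ σ * log t ≤ t ^ σ * (t ^ (r - σ) / ((r - σ) * exp 1)) :=
        mul_le_mul_of_nonneg_left (log_le_rpow_div_mul_exp_one ht (by linarith))
          (rpow_nonneg ht.le σ)
    _ = t ^ r / ((r - σ) * exp 1) := by
        rw [← mul_div_assoc, ← rpow_add ht, add_sub_cancel]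
    _ ≤ _ := by linarith

lemma rpow_mul_abs_log_div_le {a Λ σ r : ℝ} (ha : 0 ≤ a) (hΛ : 0 < Λ) (hσ : 0 < σ)
    (hσr : σ < r) :
    a ^ σ * |log (a / Λ)| ≤
      Λ ^ σ / (σ * exp 1) + Λ ^ (σ - r) / ((r - σ) * exp 1) * a ^ r := by
  calc a ^ σ * |log (a / Λ)| = Λ ^ σ * ((a / Λ) ^ σ * |log (a / Λ)|) := by
        rw [div_rpow ha hΛ.le]
        field_simp
    _ ≤ Λ ^ σ * (1 / (σ * exp 1) + (a / Λ) ^ r / ((r - σ) * exp 1)) := by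
        gcongr
        exact rpow_mul_abs_log_le (div_nonneg ha hΛ.le) hσ hσr
    _ = _ := by
        rw [div_rpow ha hΛ.le, rpow_sub hΛ]
        ring

end Real

theorem integral_rpow_mul_abs_log_div_le {α : Type*} [MeasurableSpace α] {μ : Measure α}
    [IsFiniteMeasure μ] {f : α → ℝ} {Λ σ r : ℝ} (hΛ : 0 < Λ) (hσ : 0 < σ) (hσr : σ < r)
    (hf : Integrable (fun x => |f x| ^ r) μ) :
    ∫ x, |f x| ^ σ * |log (|f x| / Λ)| ∂μ ≤
      μ.real Set.univ * (Λ ^ σ / (σ * exp 1)) +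
        Λ ^ (σ - r) / ((r - σ) * exp 1) * ∫ x, |f x| ^ r ∂μ := by
  have hbound : Integrable
      (fun x => Λ ^ σ / (σ * exp 1) + Λ ^ (σ - r) / ((r - σ) * exp 1) * |f x| ^ r) μ :=
    (integrable_const _).add (hf.const_mul _)
  calc ∫ x, |f x| ^ σ * |log (|f x| / Λ)| ∂μ
      ≤ ∫ x, Λ ^ σ / (σ * exp 1) + Λ ^ (σ - r) / ((r - σ) * exp 1) * |f x| ^ r ∂μ :=
        integral_mono_of_nonneg (.of_forall fun x => by positivity) hbound
          (.of_forall fun x => rpow_mul_abs_log_div_le (abs_nonneg _) hΛ hσ hσr)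
    _ = _ := by
        rw [integral_add (integrable_const _) (hf.const_mul _), integral_const,
          integral_const_mul, smul_eq_mul]

theorem log_weighted_norm_estimate_general (N : ℕ) (U : Set (Fin N → ℝ))
    (hUfin : volume U < ⊤)
    (u : (Fin N → ℝ) → ℝ)
    (σ r Λ S : ℝ) (hσ : 0 < σ) (hσr : σ < r) (hΛ : 0 < Λ) (hS : 0 < S)
    (hur : IntegrableOn (fun x => |u x| ^ r) U)
    (hnorm : (∫ x in U, |u x| ^ r) ^ (1 / r) ≤ S * Λ) :
    (∫ x in U, |u x| ^ σ * |Real.log (|u x| / Λ)|) ≤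
      ((volume U).toReal / (σ * Real.exp 1) + S ^ r / (Real.exp 1 * (r - σ))) * Λ ^ σ := by
  have : IsFiniteMeasure (volume.restrict U) := isFiniteMeasure_restrict.2 hUfin.ne
  have hr : 0 < r := hσ.trans hσr
  have hint_nonneg : 0 ≤ ∫ x in U, |u x| ^ r :=
    integral_nonneg fun x => rpow_nonneg (abs_nonneg _) r
  have hint_le : ∫ x in U, |u x| ^ r ≤ S ^ r * Λ ^ r := by
    rw [← mul_rpow hS.le hΛ.le, ← rpow_inv_le_iff_of_pos hint_nonneg (by positivity) hr,
      ← one_div]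
    exact hnorm
  calc ∫ x in U, |u x| ^ σ * |log (|u x| / Λ)|
      ≤ volume.real U * (Λ ^ σ / (σ * exp 1)) +
          Λ ^ (σ - r) / ((r - σ) * exp 1) * ∫ x in U, |u x| ^ r := by
        simpa only [measureReal_restrict_apply_univ] using
          integral_rpow_mul_abs_log_div_le hΛ hσ hσr hur
    _ ≤ volume.real U * (Λ ^ σ / (σ * exp 1)) +
          Λ ^ (σ - r) / ((r - σ) * exp 1) * (S ^ r * Λ ^ r) := by gcongr
    _ = _ := by
        rw [rpow_sub hΛ, measureReal_def]
        field_simp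

/-- Inequality (8) of Lemma 3.3: if `U ⊂ ℝ^N` has finite measure, `0 < σ < r`,
`Λ, S > 0`, `|u|^r` is integrable on `U` with `(∫_U |u|^r)^(1/r) ≤ S * Λ`, then
`∫_U |u|^σ * |log(|u|/Λ)| ≤ (|U|/(σ e) + S^r/(e (r - σ))) * Λ^σ`
(the integrand is `0` where `u = 0`). -/
theorem log_weighted_norm_estimate (N : ℕ) (U : Set (Fin N → ℝ))
    (hU : MeasurableSet U) (hUfin : volume U < ⊤)
    (u : (Fin N → ℝ) → ℝ) (hu : Measurable u)
    (σ r Λ S : ℝ) (hσ : 0 < σ) (hσr : σ < r) (hΛ : 0 < Λ) (hS : 0 < S)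
    (hur : IntegrableOn (fun x => |u x| ^ r) U)
    (hnorm : (∫ x in U, |u x| ^ r) ^ (1 / r) ≤ S * Λ) :
    (∫ x in U, |u x| ^ σ * |Real.log (|u x| / Λ)|) ≤
      ((volume U).toReal / (σ * Real.exp 1) + S ^ r / (Real.exp 1 * (r - σ))) * Λ ^ σ :=
  log_weighted_norm_estimate_general N U hUfin u σ r Λ S hσ hσr hΛ hS hur hnorm
end
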